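/- Monotonicity of headways in the linear follow-the-leader model: in the system y_i' = v_max (1 − L/(y_{i+1} − y_i)) for i < N and y_N' = v_max, if all initial headways satisfy y_{i+1}(0) − y_i(0) ≥ L, then headways remain ≥ L for all t ≥ 0 (no collisions). -/
import Mathlib

/-- Invariance lemma: if `g 0 ≥ L` and the derivative of `g` is nonnegative whenever
`0 < g t ≤ L` (for `t ≥ 0`), then `g t ≥ L` for all `t ≥ 0`. -/
lemma ftl_invariance (L : ℝ) (hL : 0 < L) (g d : ℝ → ℝ)
    (hd : ∀ t, 0 ≤ t → HasDerivAt g (d t) t)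
    (hpos : ∀ t, 0 ≤ t → 0 < g t → g t ≤ L → 0 ≤ d t)
    (h0 : L ≤ g 0) : ∀ t, 0 ≤ t → L ≤ g t := by
  intro t ht
  by_contra hltc
  push_neg at hltc
  have hcOn : ∀ a b : ℝ, 0 ≤ a → ContinuousOn g (Set.Icc a b) := by
    intro a b ha s hs
    exact ((hd s (le_trans ha hs.1)).continuousAt).continuousWithinAt
  -- Step A: find t1 ≥ 0 with 0 < g t1 < L
  obtain ⟨t1, ht1, hg1pos, hg1lt⟩ : ∃ t1, 0 ≤ t1 ∧ 0 < g t1 ∧ g t1 < L := by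
    rcases le_or_gt (g t) 0 with hgt | hgt
    · have hsub := intermediate_value_Icc' ht (hcOn 0 t le_rfl)
      have hmem : L / 2 ∈ Set.Icc (g t) (g 0) :=
        ⟨le_trans hgt (by linarith), by linarith⟩
      obtain ⟨t1, ht1mem, ht1eq⟩ := hsub hmem
      exact ⟨t1, ht1mem.1, by rw [ht1eq]; constructor <;> linarith⟩
    · exact ⟨t, ht, hgt, hltc⟩
  -- Step B: t0 = sup of times in [0, t1] where g ≥ L
  set S : Set ℝ := Set.Icc 0 t1 ∩ g ⁻¹' Set.Ici L with hS
  have hScl : IsClosed S :=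
    (hcOn 0 t1 le_rfl).preimage_isClosed_of_isClosed isClosed_Icc isClosed_Ici
  have hSne : S.Nonempty := ⟨0, ⟨le_rfl, ht1⟩, h0⟩
  have hSbdd : BddAbove S := ⟨t1, fun s hs => hs.1.2⟩
  set t0 : ℝ := sSup S with ht0def
  have ht0S : t0 ∈ S := hScl.csSup_mem hSne hSbdd
  have ht0le : t0 ≤ t1 := ht0S.1.2
  have ht0nn : 0 ≤ t0 := ht0S.1.1
  have hgt0 : L ≤ g t0 := ht0S.2
  have ht0lt : t0 < t1 := lt_of_le_of_ne ht0le (by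
    intro h; rw [h] at hgt0; linarith)
  have hless : ∀ s, t0 < s → s ≤ t1 → g s < L := by
    intro s hs hst1
    by_contra hge
    push_neg at hge
    have : s ∈ S := ⟨⟨le_trans ht0nn hs.le, hst1⟩, hge⟩
    exact absurd (le_csSup hSbdd this) (not_le.mpr hs)
  -- Step C: T = inf of times in [t0, t1] where g ≤ g t1
  set S2 : Set ℝ := Set.Icc t0 t1 ∩ g ⁻¹' Set.Iic (g t1) with hS2
  have hS2cl : IsClosed S2 :=
    (hcOn t0 t1 ht0nn).preimage_isClosed_of_isClosed isClosed_Icc isClosed_Iic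
  have hS2ne : S2.Nonempty := ⟨t1, ⟨ht0le, le_rfl⟩, by simp⟩
  have hS2bdd : BddBelow S2 := ⟨t0, fun s hs => hs.1.1⟩
  set T : ℝ := sInf S2 with hTdef
  have hTS2 : T ∈ S2 := hS2cl.csInf_mem hS2ne hS2bdd
  have hTge : t0 ≤ T := hTS2.1.1
  have hTle : T ≤ t1 := hTS2.1.2
  have hgT : g T ≤ g t1 := hTS2.2
  have hTgt : t0 < T := lt_of_le_of_ne hTge (by
    intro h; rw [← h] at hgT; linarith)
  have hmid : ∀ s, s ∈ Set.Ioo t0 T → g t1 < g s ∧ g s < L := by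
    intro s hs
    have hst1 : s ≤ t1 := le_trans hs.2.le hTle
    refine ⟨?_, hless s hs.1 hst1⟩
    by_contra hge
    push_neg at hge
    have : s ∈ S2 := ⟨⟨hs.1.le, hst1⟩, hge⟩
    exact absurd (csInf_le hS2bdd this) (not_le.mpr hs.2)
  -- Monotone on [t0, T]
  have hmono : MonotoneOn g (Set.Icc t0 T) := by
    apply monotoneOn_of_deriv_nonneg (convex_Icc t0 T)
    · exact fun s hs => ((hd s (le_trans ht0nn hs.1)).continuousAt).continuousWithinAt
    · intro s hs
      rw [interior_Icc] at hs
      exact ((hd s (le_trans ht0nn hs.1.le)).differentiableAt).differentiableWithinAt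
    · intro s hs
      rw [interior_Icc] at hs
      obtain ⟨h1, h2⟩ := hmid s hs
      rw [(hd s (le_trans ht0nn hs.1.le)).deriv]
      exact hpos s (le_trans ht0nn hs.1.le) (lt_trans hg1pos h1) h2.le
  have := hmono ⟨le_rfl, hTge⟩ ⟨hTge, le_rfl⟩ hTge
  linarith

theorem ftl_headways_invariant (N : ℕ) (vmax L : ℝ) (hv : 0 < vmax) (hL : 0 < L)
    (y : ℝ → Fin (N + 1) → ℝ)
    (hode : ∀ t : ℝ, 0 ≤ t → ∀ i : Fin N,
      HasDerivAt (fun s => y s (Fin.castSucc i))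
        (vmax * (1 - L / (y t i.succ - y t (Fin.castSucc i)))) t)
    (hlead : ∀ t : ℝ, 0 ≤ t → HasDerivAt (fun s => y s (Fin.last N)) vmax t)
    (h0 : ∀ i : Fin N, y 0 i.succ - y 0 (Fin.castSucc i) ≥ L) :
    ∀ t : ℝ, 0 ≤ t → ∀ i : Fin N, y t i.succ - y t (Fin.castSucc i) ≥ L := by
  have key : ∀ k : ℕ, ∀ i : Fin N, N - i.val ≤ k →
      ∀ t, 0 ≤ t → L ≤ y t i.succ - y t (Fin.castSucc i) := by
    intro k
    induction k with
    | zero =>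
      intro i hi
      have := i.isLt
      omega
    | succ k ih =>
      intro i hi t ht
      by_cases hcase : i.val + 1 = N
      · -- last car: leader moves at vmax
        have hsucc : i.succ = Fin.last N := by
          ext
          simp [Fin.val_succ, hcase]
        refine ftl_invariance L hL (fun s => y s i.succ - y s (Fin.castSucc i))
          (fun s => vmax - vmax * (1 - L / (y s i.succ - y s (Fin.castSucc i))))
          ?_ ?_ (h0 i) t ht
        · intro s hs
          have h1 := hlead s hs
          have h2 := hode s hs i
          rw [← hsucc] at h1
          exact h1.sub h2
        · intro s hs hgpos hgle
          have heq : vmax - vmax * (1 - L / (y s i.succ - y s (Fin.castSucc i)))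
              = vmax * (L / (y s i.succ - y s (Fin.castSucc i))) := by ring
          show 0 ≤ vmax - vmax * (1 - L / (y s i.succ - y s (Fin.castSucc i)))
          rw [heq]
          positivity
      · -- inner car
        have hlt : i.val + 1 < N := lt_of_le_of_ne i.isLt hcase
        set j : Fin N := ⟨i.val + 1, hlt⟩ with hj
        have hsucc : i.succ = Fin.castSucc j := by
          ext
          simp [Fin.val_succ, hj]
        have hjval : ∀ s, 0 ≤ s → L ≤ y s j.succ - y s (Fin.castSucc j) := by
          intro s hs
          refine ih j ?_ s hs
          simp only [hj]
          omega
        refine ftl_invariance L hL (fun s => y s i.succ - y s (Fin.castSucc i))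
          (fun s => vmax * (1 - L / (y s j.succ - y s (Fin.castSucc j)))
            - vmax * (1 - L / (y s i.succ - y s (Fin.castSucc i))))
          ?_ ?_ (h0 i) t ht
        · intro s hs
          have h1 := hode s hs j
          have h2 := hode s hs i
          rw [← hsucc] at h1
          exact h1.sub h2
        · intro s hs hgpos hgle
          have hjl := hjval s hs
          set a := y s i.succ - y s (Fin.castSucc i)
          set b := y s j.succ - y s (Fin.castSucc j)
          have hb : 0 < b := lt_of_lt_of_le hL hjl
          have h1 : L / b ≤ 1 := by
            rw [div_le_one hb]; exact hjl
          have h2 : 1 ≤ L / a := by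
            rw [le_div_iff₀ hgpos]; linarith
          have heq : vmax * (1 - L / b) - vmax * (1 - L / a)
              = vmax * (L / a - L / b) := by ring
          show 0 ≤ vmax * (1 - L / b) - vmax * (1 - L / a)
          rw [heq]
          have : 0 ≤ L / a - L / b := by linarith
          positivity
  intro t ht i
  exact key N i (by omega) t ht
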